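/- Let K be the convex cone of real quadratic forms on ℝ⁴ generated over the nonnegative reals by the 12 forms x_i² (1 ≤ i ≤ 4), (x_i − x_j)² (1 ≤ i < j ≤ 4 with (i,j) ≠ (1,2)), (x₁+x₂−x₃)², (x₁+x₂−x₄)², and (x₁+x₂−x₃−x₄)². Let L : ℝ⁴ → ℝ⁴ be the linear map L(x₁,x₂,x₃,x₄) = (x₁+x₂, x₁−x₂, x₁−x₃, x₁−x₄). Then the substitution q ↦ q∘L maps K onto the convex cone generated over the nonnegative reals by the 12 forms (x_i + x_j)² and (x_i − x_j)² for 1 ≤ i < j ≤ 4; in fact q ↦ q∘L maps the 12 listed generators of K bijectively onto these 12 forms. -/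
import Mathlib


open Set

noncomputable section

/-- The squared linear form `x ↦ (c ⬝ x)²` on `ℝ⁴`, viewed as a quadratic form. -/
def sqf (c : Fin 4 → ℝ) : (Fin 4 → ℝ) → ℝ := fun x => (∑ i, c i * x i) ^ 2

/-- The standard basis vectors of `ℝ⁴` (so `x i = sqf (ee i)`-linear form etc.). -/
def ee (i : Fin 4) : Fin 4 → ℝ := Pi.single i 1

/-- The convex cone generated over the nonnegative reals by a finite family of
quadratic forms. -/
def coneOf {n : ℕ} (v : Fin n → ((Fin 4 → ℝ) → ℝ)) : Set ((Fin 4 → ℝ) → ℝ) :=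
  {q | ∃ c : Fin n → ℝ, (∀ i, 0 ≤ c i) ∧ q = ∑ i, c i • v i}

/-- The Voronoi substitution `L(x₁,x₂,x₃,x₄) = (x₁+x₂, x₁−x₂, x₁−x₃, x₁−x₄)`. -/
def Lmap : (Fin 4 → ℝ) → (Fin 4 → ℝ) :=
  fun x => ![x 0 + x 1, x 0 - x 1, x 0 - x 2, x 0 - x 3]

/-- The 9 generators of the face `W₀ = V₃ ∩ V₄` of the perfect cone `K`:
`xᵢ²`, `(xᵢ-xⱼ)²` for `(i,j) ∈ {(1,3),(1,4),(2,3),(2,4)}`, and `(x₁+x₂-x₃-x₄)²`. -/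
def genW0 : Fin 9 → ((Fin 4 → ℝ) → ℝ) :=
  ![sqf (ee 0), sqf (ee 1), sqf (ee 2), sqf (ee 3),
    sqf (ee 0 - ee 2), sqf (ee 0 - ee 3), sqf (ee 1 - ee 2), sqf (ee 1 - ee 3),
    sqf (ee 0 + ee 1 - ee 2 - ee 3)]

/-- The 12 generators of the perfect cone `K`: `xᵢ²`, `(xᵢ-xⱼ)²` for `i < j`,
`(i,j) ≠ (1,2)`, together with `(x₁+x₂-x₃)²`, `(x₁+x₂-x₄)²`, `(x₁+x₂-x₃-x₄)²`. -/
def genK : Fin 12 → ((Fin 4 → ℝ) → ℝ) :=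
  ![sqf (ee 0), sqf (ee 1), sqf (ee 2), sqf (ee 3),
    sqf (ee 0 - ee 2), sqf (ee 0 - ee 3), sqf (ee 1 - ee 2), sqf (ee 1 - ee 3),
    sqf (ee 2 - ee 3),
    sqf (ee 0 + ee 1 - ee 2), sqf (ee 0 + ee 1 - ee 3),
    sqf (ee 0 + ee 1 - ee 2 - ee 3)]

/-- The 12 forms `(xᵢ + xⱼ)²` and `(xᵢ − xⱼ)²` for `1 ≤ i < j ≤ 4`. -/
def genPM : Fin 12 → ((Fin 4 → ℝ) → ℝ) :=
  ![sqf (ee 0 + ee 1), sqf (ee 0 + ee 2), sqf (ee 0 + ee 3),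
    sqf (ee 1 + ee 2), sqf (ee 1 + ee 3), sqf (ee 2 + ee 3),
    sqf (ee 0 - ee 1), sqf (ee 0 - ee 2), sqf (ee 0 - ee 3),
    sqf (ee 1 - ee 2), sqf (ee 1 - ee 3), sqf (ee 2 - ee 3)]

def sigmaF : Fin 12 → Fin 12 := ![0,6,7,8,3,4,9,10,11,1,2,5]
def sigmaG : Fin 12 → Fin 12 := ![0,9,10,4,5,11,1,2,3,6,7,8]

def sigmaK : Equiv.Perm (Fin 12) := ⟨sigmaF, sigmaG, by decide, by decide⟩

lemma sigmaK_apply (i : Fin 12) : sigmaK i = sigmaF i := rfl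

lemma ee0 : ee 0 = ![1,0,0,0] := by funext j; fin_cases j <;> simp [ee]
lemma ee1 : ee 1 = ![0,1,0,0] := by funext j; fin_cases j <;> simp [ee]
lemma ee2 : ee 2 = ![0,0,1,0] := by funext j; fin_cases j <;> simp [ee]
lemma ee3 : ee 3 = ![0,0,0,1] := by funext j; fin_cases j <;> simp [ee]

lemma comp_eq (a b : Fin 4 → ℝ)
    (h : ∀ x, (∑ i, a i * Lmap x i) ^ 2 = (∑ i, b i * x i) ^ 2) :
    sqf a ∘ Lmap = sqf b := funext fun x => h x

set_option maxHeartbeats 3200000 in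
lemma key (i : Fin 12) : genK i ∘ Lmap = genPM (sigmaK i) := by
  fin_cases i <;> refine comp_eq _ _ fun x => ?_ <;>
    simp only [Lmap, Fin.sum_univ_four, Pi.add_apply, Pi.sub_apply,
      ee0, ee1, ee2, ee3,
      Matrix.cons_val_zero, Matrix.cons_val_one, Matrix.head_cons,
      Matrix.cons_val_two, Matrix.tail_cons, Matrix.cons_val_three,
      Matrix.cons_val_fin_one] <;> ring

def Linv : (Fin 4 → ℝ) → (Fin 4 → ℝ) :=
  fun y => ![(y 0 + y 1)/2, (y 0 - y 1)/2, (y 0 + y 1)/2 - y 2, (y 0 + y 1)/2 - y 3]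

lemma Lmap_Linv (y : Fin 4 → ℝ) : Lmap (Linv y) = y := by
  funext i
  fin_cases i <;> simp [Lmap, Linv] <;> ring

lemma comp_sum {n : ℕ} (c : Fin n → ℝ) (v : Fin n → ((Fin 4 → ℝ) → ℝ)) :
    (∑ i, c i • v i) ∘ Lmap = ∑ i, c i • (v i ∘ Lmap) := by
  funext x
  simp [Finset.sum_apply, Function.comp]

/-- The substitution `q ↦ q ∘ L` carries the perfect cone `K` onto the cone generated
by the 12 forms `(xᵢ ± xⱼ)²`, and maps the 12 generators of `K` bijectively onto
these 12 forms. -/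
theorem voronoi_transformation_of_K :
    (fun q => q ∘ Lmap) '' coneOf genK = coneOf genPM ∧
    Set.BijOn (fun q => q ∘ Lmap) (Set.range genK) (Set.range genPM) := by
  constructor
  · apply Set.Subset.antisymm
    · rintro q ⟨p, ⟨c, hc, rfl⟩, rfl⟩
      refine ⟨fun j => c (sigmaK.symm j), fun j => hc _, ?_⟩
      simp only [comp_sum, key]
      rw [← Equiv.sum_comp sigmaK (fun j => c (sigmaK.symm j) • genPM j)]
      simp
    · rintro q ⟨c, hc, rfl⟩
      refine ⟨∑ i, c (sigmaK i) • genK i, ⟨fun i => c (sigmaK i), fun i => hc _, rfl⟩, ?_⟩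
      simp only [comp_sum, key]
      exact Equiv.sum_comp sigmaK (fun j => c j • genPM j)
  · refine ⟨?_, ?_, ?_⟩
    · rintro q ⟨i, rfl⟩
      exact ⟨sigmaK i, (key i).symm⟩
    · rintro q _ p _ h
      have : q ∘ Lmap ∘ Linv = p ∘ Lmap ∘ Linv := by
        simp only [← Function.comp_assoc]
        exact congrArg (· ∘ Linv) h
      funext y
      have := congrFun this y
      simpa [Function.comp, Lmap_Linv] using this
    · rintro q ⟨j, rfl⟩
      exact ⟨genK (sigmaK.symm j), ⟨_, rfl⟩, by simp [key]⟩
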